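/- On ℝ³ let ⟨x,y⟩₁,₂ := −x₁y₁ + x₂y₂ + x₃y₃. Let V₀ ⊆ ℝ³ be a two-dimensional linear subspace and b₁ ∈ V₀ a nonzero vector with ⟨b₁,b₁⟩₁,₂ = 0 and ⟨b₁,x⟩₁,₂ = 0 for all x ∈ V₀ (so V₀ is a degenerate plane with null direction b₁). Let Λ ⊆ V₀ be the set of integer linear combinations of some ℝ-basis of V₀ (a lattice in V₀). If A is a 3×3 real matrix with ⟨Ax,Ay⟩₁,₂ = ⟨x,y⟩₁,₂ for all x,y, det A = 1, A₁₁ > 0 (A preserves the time orientation), and A(Λ) = Λ, then A·b₁ = b₁. -/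

import Mathlib

/-!
Since `A` preserves `Λ = ℤv + ℤw`, it preserves the plane `V₀`, and in the basis `v, w` it acts by
an integer matrix with integer inverse, whose determinant `D` therefore satisfies `D² = 1`.
The vector `A b₁` is again null and orthogonal to `V₀ ∋ b₁`, and orthogonal null vectors are
proportional, so `A b₁ = μ b₁`. The form induced on the line `V₀ / ℝb₁` is nonzero and
`A`-invariant, so `A` acts on it by `±1`; hence `μ² = D² = 1`. Finally `μ > 0` because `A₁₁ > 0`
means that `A` maps the future light cone to itself.
-/

/-- The Minkowski inner product `⟨x,y⟩₁,₂ = −x₁y₁ + x₂y₂ + x₃y₃` on `ℝ³`. -/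
def mdot (x y : Fin 3 → ℝ) : ℝ := -(x 0 * y 0) + x 1 * y 1 + x 2 * y 2

open Matrix

section Plane

variable {E : Type*} [AddCommGroup E] [Module ℝ E]

theorem sq_eq_det_sq_of_mem_radical_of_apply_self_ne_zero {B : LinearMap.BilinForm ℝ E}
    (hB : B.IsSymm) {f : E →ₗ[ℝ] E} (hf : ∀ x y, B (f x) (f y) = B x y) {v w b : E}
    (hvw : LinearIndependent ℝ ![v, w]) {p q r s a c μ : ℝ} (hfv : f v = p • v + q • w)
    (hfw : f w = r • v + s • w) (hb : a • v + c • w = b) (hb0 : b ≠ 0) (hbb : B b b = 0)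
    (hbw : B b w = 0) (hww : B w w ≠ 0) (hfb : f b = μ • b) :
    μ ^ 2 = (p * s - q * r) ^ 2 := by
  have ha : a ≠ 0 := by
    rintro rfl
    have : c ^ 2 * B w w = 0 := by simpa [← hb, pow_two, mul_assoc] using hbb
    simp_all
  obtain ⟨hμa, hμc⟩ : a * p + c * r = μ * a ∧ a * q + c * s = μ * c := by
    refine hvw.eq_of_pair ?_
    calc _ = f b := by rw [← hb, map_add, map_smul, map_smul, hfv, hfw]; module
      _ = _ := by rw [hfb, ← hb]; module
  -- Modulo `b`, `f` multiplies `w` by `(s a - r c) / a`; the form only sees `V / ℝb`.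
  have hdecomp : a • f w = r • b + (s * a - r * c) • w := by
    rw [hfw, ← hb]
    module
  have hquot : (s * a - r * c) ^ 2 = a ^ 2 := by
    have h := congrArg (fun x => B x x) hdecomp
    simp only [map_add, map_smul, LinearMap.add_apply, LinearMap.smul_apply, smul_eq_mul,
      hf, hbb, hbw, hB.eq w b] at h
    apply mul_right_cancel₀ hww
    linear_combination -h
  have hdet : μ * (s * a - r * c) = a * (p * s - q * r) := by
    linear_combination r * hμc - s * hμa
  apply mul_right_cancel₀ (pow_ne_zero 2 ha)
  linear_combination (μ * (s * a - r * c) + a * (p * s - q * r)) * hdet - μ ^ 2 * hquot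

theorem sq_eq_det_sq_of_mem_radical {B : LinearMap.BilinForm ℝ E} (hB : B.IsSymm)
    {f : E →ₗ[ℝ] E} (hf : ∀ x y, B (f x) (f y) = B x y) {v w b : E}
    (hvw : LinearIndependent ℝ ![v, w]) {p q r s a c μ : ℝ} (hfv : f v = p • v + q • w)
    (hfw : f w = r • v + s • w) (hb : a • v + c • w = b) (hb0 : b ≠ 0) (hbb : B b b = 0)
    (hbv : B b v = 0) (hbw : B b w = 0) (hne : B v v ≠ 0 ∨ B w w ≠ 0) (hfb : f b = μ • b) :
    μ ^ 2 = (p * s - q * r) ^ 2 := by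
  rcases hne with hvv | hww
  · have := sq_eq_det_sq_of_mem_radical_of_apply_self_ne_zero hB hf
      (LinearIndependent.pair_symm_iff.mp hvw) (p := s) (q := r) (r := q) (s := p)
      (by rw [hfw, add_comm]) (by rw [hfv, add_comm]) (by rw [← hb, add_comm])
      hb0 hbb hbv hvv hfb
    linear_combination this
  · exact sq_eq_det_sq_of_mem_radical_of_apply_self_ne_zero hB hf hvw hfv hfw hb hb0 hbb hbw hww
      hfb

def pairLattice (v w : E) : Set E := {x | ∃ m n : ℤ, x = m • v + n • w}

lemma mem_pairLattice_iff {v w x : E} :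
    x ∈ pairLattice v w ↔ ∃ m n : ℤ, x = (m : ℝ) • v + (n : ℝ) • w := by
  simp only [pairLattice, Set.mem_ofPred_eq, Int.cast_smul_eq_zsmul]

lemma exists_int_coeffs_of_image_pairLattice {v w : E} (hvw : LinearIndependent ℝ ![v, w])
    (f : E →ₗ[ℝ] E) (hf : f '' pairLattice v w = pairLattice v w) :
    ∃ p q r s : ℤ, f v = (p : ℝ) • v + (q : ℝ) • w ∧ f w = (r : ℝ) • v + (s : ℝ) • w ∧
      IsUnit (p * s - q * r) := by
  have hv : v ∈ pairLattice v w := ⟨1, 0, by simp⟩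
  have hw : w ∈ pairLattice v w := ⟨0, 1, by simp⟩
  obtain ⟨p, q, hfv⟩ := mem_pairLattice_iff.mp (hf ▸ Set.mem_image_of_mem f hv)
  obtain ⟨r, s, hfw⟩ := mem_pairLattice_iff.mp (hf ▸ Set.mem_image_of_mem f hw)
  obtain ⟨x, hx, hxv⟩ := hf.symm ▸ hv
  obtain ⟨y, hy, hyw⟩ := hf.symm ▸ hw
  obtain ⟨p', q', rfl⟩ := mem_pairLattice_iff.mp hx
  obtain ⟨r', s', rfl⟩ := mem_pairLattice_iff.mp hy
  have hcoeff : ∀ m n : ℤ, f ((m : ℝ) • v + (n : ℝ) • w) =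
      ((m * p + n * r : ℤ) : ℝ) • v + ((m * q + n * s : ℤ) : ℝ) • w := by
    intro m n
    rw [map_add, map_smul, map_smul, hfv, hfw]
    push_cast
    module
  obtain ⟨h₁, h₂⟩ := hvw.eq_of_pair <| ((hcoeff p' q').symm.trans hxv).trans
    (by simp : v = ((1 : ℤ) : ℝ) • v + ((0 : ℤ) : ℝ) • w)
  obtain ⟨h₃, h₄⟩ := hvw.eq_of_pair <| ((hcoeff r' s').symm.trans hyw).trans
    (by simp : w = ((0 : ℤ) : ℝ) • v + ((1 : ℤ) : ℝ) • w)
  simp only [Int.cast_inj] at h₁ h₂ h₃ h₄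
  refine ⟨p, q, r, s, hfv, hfw, IsUnit.of_mul_eq_one_right (p' * s' - q' * r') ?_⟩
  linear_combination (r' * q + s' * s) * h₁ - (r' * p + s' * r) * h₂ + h₄

end Plane

section LightCone

lemma apply_zero_ne_zero_of_mdot_self_eq_zero {x : Fin 3 → ℝ} (hx : mdot x x = 0)
    (hx0 : x ≠ 0) : x 0 ≠ 0 := by
  intro h0
  apply hx0
  have h12 : x 1 ^ 2 + x 2 ^ 2 = 0 := by
    simp only [mdot, h0] at hx
    linear_combination hx
  have h1 : x 1 = 0 := by nlinarith [sq_nonneg (x 1), sq_nonneg (x 2)]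
  have h2 : x 2 = 0 := by nlinarith [sq_nonneg (x 1), sq_nonneg (x 2)]
  funext i
  fin_cases i <;> assumption

lemma exists_eq_smul_of_mdot_eq_zero {x y : Fin 3 → ℝ} (hx : mdot x x = 0) (hx0 : x ≠ 0)
    (hy : mdot y y = 0) (hxy : mdot x y = 0) : ∃ μ : ℝ, y = μ • x := by
  have hx0' := apply_zero_ne_zero_of_mdot_self_eq_zero hx hx0
  simp only [mdot] at hx hy hxy
  -- Lagrange's identity: `x₀² ⟨y,y⟩ + y₀² ⟨x,x⟩ - 2 x₀ y₀ ⟨x,y⟩` is a sum of two squares.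
  have hsum : (x 0 * y 1 - y 0 * x 1) ^ 2 + (x 0 * y 2 - y 0 * x 2) ^ 2 = 0 := by
    linear_combination x 0 ^ 2 * hy + y 0 ^ 2 * hx - 2 * x 0 * y 0 * hxy
  have h1 : x 0 * y 1 - y 0 * x 1 = 0 := by
    nlinarith [sq_nonneg (x 0 * y 1 - y 0 * x 1), sq_nonneg (x 0 * y 2 - y 0 * x 2)]
  have h2 : x 0 * y 2 - y 0 * x 2 = 0 := by
    nlinarith [sq_nonneg (x 0 * y 1 - y 0 * x 1), sq_nonneg (x 0 * y 2 - y 0 * x 2)]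
  refine ⟨y 0 / x 0, funext fun i => ?_⟩
  fin_cases i <;>
    simp only [Fin.zero_eta, Fin.mk_one, Fin.reduceFinMk, Fin.isValue, Pi.smul_apply,
      smul_eq_mul] <;>
    field_simp <;> linarith

lemma mdot_mul_apply_zero_neg {t x : Fin 3 → ℝ} (ht : mdot t t < 0) (ht0 : 0 < t 0)
    (hx : mdot x x = 0) (hx0 : x ≠ 0) : mdot t x * x 0 < 0 := by
  have hx0' := apply_zero_ne_zero_of_mdot_self_eq_zero hx hx0
  simp only [mdot] at ht hx ⊢
  have hcs : (t 1 * x 1 + t 2 * x 2) ^ 2 < (t 0 * x 0) ^ 2 := by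
    nlinarith [sq_nonneg (t 1 * x 2 - t 2 * x 1), sq_pos_of_ne_zero hx0']
  have hlt : |(t 1 * x 1 + t 2 * x 2) * x 0| < t 0 * x 0 ^ 2 :=
    abs_lt_of_sq_lt_sq (by nlinarith [sq_pos_of_ne_zero hx0', hcs]) (by positivity)
  nlinarith [le_abs_self ((t 1 * x 1 + t 2 * x 2) * x 0)]

lemma mdot_smul_right (c : ℝ) (x y : Fin 3 → ℝ) : mdot x (c • y) = c * mdot x y := by
  simp only [mdot, Pi.smul_apply, smul_eq_mul]
  ring

lemma pos_of_mulVec_eq_smul {A : Matrix (Fin 3) (Fin 3) ℝ}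
    (hA : ∀ x y, mdot (A *ᵥ x) (A *ᵥ y) = mdot x y) (htime : 0 < A 0 0) {x : Fin 3 → ℝ}
    (hx : mdot x x = 0) (hx0 : x ≠ 0) {μ : ℝ} (hμ : A *ᵥ x = μ • x) : 0 < μ := by
  set t := A *ᵥ Pi.single 0 1
  have ht : mdot t t < 0 := by rw [hA]; simp [mdot]
  have ht0 : 0 < t 0 := by simpa [t, mulVec_single_one] using htime
  have htx : μ * mdot t x = -x 0 := by
    have := hA (Pi.single 0 1) x
    rw [hμ, mdot_smul_right] at this
    exact this.trans (by simp [mdot])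
  have hx0' := apply_zero_ne_zero_of_mdot_self_eq_zero hx hx0
  have hneg : mdot t x * x 0 < 0 := mdot_mul_apply_zero_neg ht ht0 hx hx0
  refine pos_of_mul_neg_left ?_ hneg.le
  linear_combination x 0 * htx + sq_pos_of_ne_zero hx0'

lemma mdot_self_ne_zero_or_of_null {v w b : Fin 3 → ℝ} (hvw : LinearIndependent ℝ ![v, w])
    (hb : mdot b b = 0) (hb0 : b ≠ 0) (hbv : mdot b v = 0) (hbw : mdot b w = 0) :
    mdot v v ≠ 0 ∨ mdot w w ≠ 0 := by
  by_contra! hnull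
  obtain ⟨α, rfl⟩ := exists_eq_smul_of_mdot_eq_zero hb hb0 hnull.1 hbv
  obtain ⟨β, rfl⟩ := exists_eq_smul_of_mdot_eq_zero hb hb0 hnull.2 hbw
  have hβα := LinearIndependent.pair_iff.mp hvw β (-α) (by module)
  have hv := hvw.ne_zero 0
  simp_all

end LightCone

def mdotForm : LinearMap.BilinForm ℝ (Fin 3 → ℝ) :=
  LinearMap.mk₂ ℝ mdot
    (fun _ _ _ => by simp only [mdot, Pi.add_apply]; ring)
    (fun _ _ _ => by simp only [mdot, Pi.smul_apply, smul_eq_mul]; ring)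
    (fun _ _ _ => by simp only [mdot, Pi.add_apply]; ring)
    (fun _ _ _ => by simp only [mdot, Pi.smul_apply, smul_eq_mul]; ring)

lemma mdotForm_apply (x y : Fin 3 → ℝ) : mdotForm x y = mdot x y := rfl

lemma mdotForm_isSymm : mdotForm.IsSymm :=
  ⟨fun x y => by simp only [mdotForm_apply, mdot]; ring⟩

theorem stmt11_general (v w b₁ : Fin 3 → ℝ)
    (hindep : LinearIndependent ℝ ![v, w])
    (hb₁mem : b₁ ∈ Submodule.span ℝ {v, w}) (hb₁ne : b₁ ≠ 0)
    (hnull : mdot b₁ b₁ = 0)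
    (hdeg : ∀ x ∈ Submodule.span ℝ ({v, w} : Set (Fin 3 → ℝ)), mdot b₁ x = 0)
    (A : Matrix (Fin 3) (Fin 3) ℝ)
    (hA : ∀ x y : Fin 3 → ℝ, mdot (A.mulVec x) (A.mulVec y) = mdot x y)
    (htime : 0 < A 0 0)
    (hlat : A.mulVec '' {x | ∃ m n : ℤ, x = m • v + n • w} =
      {x | ∃ m n : ℤ, x = m • v + n • w}) :
    A.mulVec b₁ = b₁ := by
  obtain ⟨p, q, r, s, hAv, hAw, hunit⟩ :=
    exists_int_coeffs_of_image_pairLattice hindep (toLin' A) hlat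
  obtain ⟨a, c, hb₁⟩ := Submodule.mem_span_pair.mp hb₁mem
  have hAb₁ : A *ᵥ b₁ ∈ Submodule.span ℝ {v, w} := by
    refine Submodule.mem_span_pair.mpr ⟨a * p + c * r, a * q + c * s, ?_⟩
    rw [← toLin'_apply, ← hb₁, map_add, map_smul, map_smul, hAv, hAw]
    module
  have hb₁v : mdot b₁ v = 0 := hdeg v (Submodule.subset_span (by simp))
  have hb₁w : mdot b₁ w = 0 := hdeg w (Submodule.subset_span (by simp))
  obtain ⟨μ, hμ⟩ := exists_eq_smul_of_mdot_eq_zero hnull hb₁ne (by rw [hA, hnull]) (hdeg _ hAb₁)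
  have hμsq : μ ^ 2 = 1 := by
    rw [sq_eq_det_sq_of_mem_radical mdotForm_isSymm (f := toLin' A) hA hindep hAv hAw hb₁
      hb₁ne hnull hb₁v hb₁w (mdot_self_ne_zero_or_of_null hindep hnull hb₁ne hb₁v hb₁w) hμ]
    exact_mod_cast Int.isUnit_sq hunit
  obtain rfl : μ = 1 := by nlinarith [pos_of_mulVec_eq_smul hA htime hnull hb₁ne hμ]
  rw [hμ, one_smul]

/-- Let `V₀ = span{v,w}` be a two-dimensional degenerate plane in `ℝ^{1,2}`
with null direction `b₁` (so `b₁ ∈ V₀`, `b₁ ≠ 0`, `⟨b₁,b₁⟩₁,₂ = 0`, `b₁ ⊥ V₀`), and let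
`Λ = ℤv + ℤw` be the lattice spanned by the basis `v,w` of `V₀`.  If `A ∈ SO₀(1,2)`
(form-preserving, `det A = 1`, `A₁₁ > 0`) satisfies `A(Λ) = Λ`, then `A b₁ = b₁`. -/
theorem stmt11 (v w b₁ : Fin 3 → ℝ)
    (hindep : LinearIndependent ℝ ![v, w])
    (hb₁mem : b₁ ∈ Submodule.span ℝ {v, w}) (hb₁ne : b₁ ≠ 0)
    (hnull : mdot b₁ b₁ = 0)
    (hdeg : ∀ x ∈ Submodule.span ℝ ({v, w} : Set (Fin 3 → ℝ)), mdot b₁ x = 0)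
    (A : Matrix (Fin 3) (Fin 3) ℝ)
    (hA : ∀ x y : Fin 3 → ℝ, mdot (A.mulVec x) (A.mulVec y) = mdot x y)
    (hdet : A.det = 1) (htime : 0 < A 0 0)
    (hlat : A.mulVec '' {x | ∃ m n : ℤ, x = m • v + n • w} =
      {x | ∃ m n : ℤ, x = m • v + n • w}) :
    A.mulVec b₁ = b₁ :=
  stmt11_general v w b₁ hindep hb₁mem hb₁ne hnull hdeg A hA htime hlat
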